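/- Let G(V,E) be a graph, let V₁ ⊆ V host an (r,t)-RS graph H with induced matchings M₁,...,M_t, where r = c·|V₁| for a constant c < 1/4 and |V| = |V₁| + (|V₁| − 2r). Suppose E consists of: (a) for each j ∈ [t], a sub-matching of M_j (for j ≠ j* these are arbitrary subsets; for j = j* it is M_{j*} restricted to a vector x with ‖x‖₀ = r/2), (b) a perfect matching between V₁ \ V(M_{j*}) and V \ V₁, and (c) the p-clique family of a perfect p-hypermatching 𝓜 on R(M_{j*}), with p even. Then: if (x,𝓜) is a Yes instance of BHH⁰_{r,p}, opt(G) ≥ (|V₁| − 2r) + 3r/4, and if it is a No instance, opt(G) ≤ (|V₁| − 2r) + 3r/4 − r/(2p). In particular, taking p ≤ c/(2ε), (1−ε)·opt_Yes > opt_No. -/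

import Mathlib

/-!
Yes case: `P` matches every vertex outside `V₁`, and it can be extended inside `V(M_{j*})` by the
`r/2` edges of `M_{j*}|_x` together with a pairing, inside each clique, of the `v ℓ` with
`x ℓ = false` (an even number per clique, since `p` and the number of `x ℓ = true` in it are even); this
gives `(|V₁| - 2r) + r/2 + r/4` edges.

No case: an edge of `G` either meets one of the `|V₁| - 2r` vertices of `V₁ \ V(M_{j*})`, or lies
in the block formed by a clique `{v ℓ : h ℓ = j}` and the partners `u ℓ` of the `t_j` of its
vertices with `x ℓ = true`. Such a block has the odd size `p + t_j`, so a matching uses at most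
`(p + t_j - 1)/2` edges inside it, and summing over the `q = r/p` blocks gives `3r/4 - r/(2p)`.
-/

open Finset
open scoped Classical

/-- `M` is a matching in the graph `G`: a set of edges of `G` that are pairwise
vertex-disjoint. -/
def IsMatchingIn {V : Type*} (G : SimpleGraph V) (M : Finset (Sym2 V)) : Prop :=
  (∀ e ∈ M, e ∈ G.edgeSet) ∧
  ∀ e ∈ M, ∀ f ∈ M, e ≠ f → ∀ v : V, v ∈ e → v ∉ f

/-- The maximum matching size of a graph on a finite vertex set. -/
noncomputable def matchNum {V : Type*} [Fintype V] (G : SimpleGraph V) : ℕ :=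
  sSup {k | ∃ M : Finset (Sym2 V), IsMatchingIn G M ∧ M.card = k}

def VertexDisjoint {V : Type*} (M : Finset (Sym2 V)) : Prop :=
  ∀ e ∈ M, ∀ f ∈ M, e ≠ f → ∀ w : V, w ∈ e → w ∉ f

namespace VertexDisjoint

variable {V : Type*} {M N : Finset (Sym2 V)}

theorem subset (hM : VertexDisjoint M) (hNM : N ⊆ M) : VertexDisjoint N :=
  fun e he f hf => hM e (hNM he) f (hNM hf)

theorem subsingleton_filter_mem (hM : VertexDisjoint M) (w : V) :
    ({e ∈ M | w ∈ e} : Set (Sym2 V)).Subsingleton := by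
  rintro e ⟨he, hwe⟩ f ⟨hf, hwf⟩
  by_contra hef
  exact hM e he f hf hef w hwe hwf

theorem card_le_of_forall_exists_mem (hM : VertexDisjoint M) {S : Finset V}
    (hS : ∀ e ∈ M, ∃ w ∈ e, w ∈ S) : M.card ≤ S.card :=
  card_le_card_of_forall_subsingleton (fun e w => w ∈ e)
    (fun e he => let ⟨w, hwe, hwS⟩ := hS e he; ⟨w, hwS, hwe⟩)
    fun w _ => (hM.subsingleton_filter_mem w).anti fun _ he => ⟨he.1, he.2⟩

theorem two_mul_card_le [DecidableEq V] (hM : VertexDisjoint M) {W : Finset V}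
    (hW : ∀ e ∈ M, ¬ e.IsDiag ∧ ∀ w ∈ e, w ∈ W) : 2 * M.card ≤ W.card := by
  rw [mul_comm, ← mul_one W.card]
  refine card_mul_le_card_mul (fun e w => w ∈ e) (fun e he => ?_) fun w _ =>
    card_le_one.mpr fun e he f hf =>
      hM.subsingleton_filter_mem w ((mem_bipartiteBelow _).mp he) ((mem_bipartiteBelow _).mp hf)
  induction e using Sym2.ind with
  | _ a b =>
    obtain ⟨hab, hW⟩ := hW _ he
    rw [← card_pair (by simpa using hab : a ≠ b)]
    refine card_le_card fun w hw => (mem_bipartiteAbove _).mpr ⟨hW w ?_, ?_⟩ <;>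
      rcases mem_insert.mp hw with rfl | hw <;> simp_all

theorem insert [DecidableEq V] {e : Sym2 V} (hM : VertexDisjoint M)
    (he : ∀ w ∈ e, ∀ f ∈ M, w ∉ f) : VertexDisjoint (Insert.insert e M) := by
  intro a ha b hb hab w hwa hwb
  rcases mem_insert.mp ha with rfl | haM <;> rcases mem_insert.mp hb with rfl | hbM
  · exact hab rfl
  · exact he w hwa b hbM hwb
  · exact he w hwb a haM hwa
  · exact hM a haM b hbM hab w hwa hwb

theorem image_map [DecidableEq V] {α : Type*} {f : α → V} (hf : Function.Injective f)
    {Q : Finset (Sym2 α)} (hQ : VertexDisjoint Q) : VertexDisjoint (Q.image (Sym2.map f)) := by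
  simp only [VertexDisjoint, mem_image]
  rintro _ ⟨d, hd, rfl⟩ _ ⟨d', hd', rfl⟩ hne w hw hw'
  obtain ⟨a, ha, rfl⟩ := Sym2.mem_map.mp hw
  obtain ⟨a', ha', hfa⟩ := Sym2.mem_map.mp hw'
  rw [hf hfa] at ha'
  exact hQ d hd d' hd' (by rintro rfl; exact hne rfl) a ha ha'

theorem union [DecidableEq V] (hM : VertexDisjoint M) (hN : VertexDisjoint N) (X : Set V)
    (hMX : ∀ e ∈ M, ∀ w ∈ e, w ∈ X) (hNX : ∀ e ∈ N, ∀ w ∈ e, w ∉ X) :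
    VertexDisjoint (M ∪ N) := by
  intro e he f hf hef w hwe hwf
  rcases mem_union.mp he with he | he <;> rcases mem_union.mp hf with hf | hf
  · exact hM e he f hf hef w hwe hwf
  · exact hNX f hf w hwf (hMX e he w hwe)
  · exact hNX e he w hwe (hMX f hf w hwf)
  · exact hN e he f hf hef w hwe hwf

end VertexDisjoint

theorem disjoint_of_forall_mem_of_forall_notMem {V : Type*} {M N : Finset (Sym2 V)} (X : Set V)
    (hMX : ∀ e ∈ M, ∀ w ∈ e, w ∈ X) (hNX : ∀ e ∈ N, ∀ w ∈ e, w ∉ X) : Disjoint M N := by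
  refine disjoint_left.mpr fun e hM hN => ?_
  have hw := e.out_fst_mem
  exact hNX e hN _ hw (hMX e hM _ hw)

theorem even_card_filter_erase_erase {α β : Type*} [DecidableEq α] [DecidableEq β] {f : α → β}
    {S : Finset α} (hS : ∀ c, Even (S.filter (f · = c)).card) {a b : α} (ha : a ∈ S) (hb : b ∈ S)
    (hfab : f a = f b) (hab : a ≠ b) (c : β) :
    Even (((S.erase a).erase b).filter (f · = c)).card := by
  rw [filter_erase, filter_erase]
  by_cases hc : f a = c
  · subst hc
    rw [card_erase_of_mem (by simp [hb, hfab, hab.symm]), card_erase_of_mem (by simp [ha])]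
    obtain ⟨k, hk⟩ := hS (f a)
    exact ⟨k - 1, by omega⟩
  · rw [erase_eq_of_notMem (by simp [← hfab, hc]), erase_eq_of_notMem (by simp [hc])]
    exact hS c

theorem exists_vertexDisjoint_pairing {α β : Type*} [DecidableEq α] [DecidableEq β]
    (f : α → β) (S : Finset α) (hS : ∀ c, Even (S.filter (f · = c)).card) :
    ∃ Q : Finset (Sym2 α), VertexDisjoint Q ∧
      (∀ e ∈ Q, ∃ a b, a ≠ b ∧ a ∈ S ∧ b ∈ S ∧ f a = f b ∧ e = s(a, b)) ∧
      2 * Q.card = S.card := by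
  induction S using Finset.strongInduction with
  | H S ih =>
  rcases S.eq_empty_or_nonempty with rfl | ⟨a, ha⟩
  · exact ⟨∅, by simp [VertexDisjoint], by simp, by simp⟩
  obtain ⟨b, hb, hba⟩ : ∃ b ∈ S.filter (f · = f a), b ≠ a := by
    have hpos : 0 < (S.filter (f · = f a)).card := card_pos.mpr ⟨a, by simp [ha]⟩
    obtain ⟨k, hk⟩ := hS (f a)
    exact exists_mem_ne (by omega) a
  obtain ⟨hbS, hfb⟩ := mem_filter.mp hb
  set S' := (S.erase a).erase b
  have haS' : a ∉ S' := by simp [S']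
  have hbS' : b ∉ S' := by simp [S']
  have hS'S : S' ⊂ S := (erase_subset _ _).trans_ssubset (erase_ssubset ha)
  have hS'card : S'.card + 2 = S.card := by
    rw [card_erase_of_mem (by simp [hbS, hba]), card_erase_of_mem ha]
    have : 1 < S.card := one_lt_card.mpr ⟨a, ha, b, hbS, hba.symm⟩
    omega
  obtain ⟨Q, hQ, hQS', hQcard⟩ :=
    ih S' hS'S (even_card_filter_erase_erase hS ha hbS hfb.symm hba.symm)
  have hQavoid : ∀ w ∈ s(a, b), ∀ e ∈ Q, w ∉ e := by
    intro w hw e he hwe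
    obtain ⟨a', b', -, ha', hb', -, rfl⟩ := hQS' e he
    rcases Sym2.mem_iff.mp hw with rfl | rfl <;> rcases Sym2.mem_iff.mp hwe with rfl | rfl <;>
      contradiction
  refine ⟨insert s(a, b) Q, hQ.insert hQavoid, ?_, ?_⟩
  · intro e he
    rcases mem_insert.mp he with rfl | he
    · exact ⟨a, b, hba.symm, ha, hbS, hfb.symm, rfl⟩
    · obtain ⟨a', b', hab', ha', hb', hf', rfl⟩ := hQS' e he
      exact ⟨a', b', hab', hS'S.subset ha', hS'S.subset hb', hf', rfl⟩
  · rw [card_insert_of_notMem fun hmem => hQavoid a (by simp) _ hmem (by simp)]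
    omega

theorem IsMatchingIn.card_le_matchNum {V : Type*} [Fintype V] {G : SimpleGraph V}
    {M : Finset (Sym2 V)} (hM : IsMatchingIn G M) : M.card ≤ matchNum G :=
  le_csSup ⟨Fintype.card (Sym2 V), by rintro _ ⟨M, -, rfl⟩; exact M.card_le_univ⟩ ⟨M, hM, rfl⟩

theorem IsMatchingIn.vertexDisjoint {V : Type*} {G : SimpleGraph V} {M : Finset (Sym2 V)}
    (hM : IsMatchingIn G M) : VertexDisjoint M :=
  hM.2

theorem exists_isMatchingIn_card_eq_matchNum {V : Type*} [Fintype V] (G : SimpleGraph V) :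
    ∃ M, IsMatchingIn G M ∧ M.card = matchNum G :=
  Nat.sSup_mem (s := {k | ∃ M : Finset (Sym2 V), IsMatchingIn G M ∧ M.card = k})
    ⟨0, ∅, ⟨by simp, by simp⟩, rfl⟩
    ⟨Fintype.card (Sym2 V), by rintro _ ⟨M, -, rfl⟩; exact M.card_le_univ⟩

section InnerEdges

variable {V : Type*} [DecidableEq V] {r q p : ℕ} {u v : Fin r → V} {x : Fin r → Bool}
  {h : Fin r → Fin q}

/-- `M_{j*}|_x`, where `s(u ℓ, v ℓ)` is the `ℓ`-th edge of `M_{j*}`. -/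
def keptEdges (u v : Fin r → V) (x : Fin r → Bool) : Finset (Sym2 V) :=
  (univ.filter fun ℓ => x ℓ = true).image fun ℓ => s(u ℓ, v ℓ)

/-- The `p`-clique family of the hypermatching `h` (with hyperedges the fibres of `h`) placed on
`R(M_{j*}) = {v ℓ}`. -/
def cliqueEdges [Fintype V] (v : Fin r → V) (h : Fin r → Fin q) : Finset (Sym2 V) :=
  univ.filter fun e => ∃ ℓ ℓ', ℓ ≠ ℓ' ∧ h ℓ = h ℓ' ∧ e = s(v ℓ, v ℓ')

/-- The clique of the `j`-th hyperedge together with the `M_{j*}|_x`-partners of its vertices. -/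
def blockVertices (u v : Fin r → V) (x : Fin r → Bool) (h : Fin r → Fin q) (j : Fin q) :
    Finset V :=
  ((univ.filter fun ℓ => h ℓ = j ∧ x ℓ = true).disjSum (univ.filter fun ℓ => h ℓ = j)).image
    (Sum.elim u v)

theorem card_blockVertices (huv : Function.Injective (Sum.elim u v)) (j : Fin q) :
    (blockVertices u v x h j).card =
      (univ.filter fun ℓ => h ℓ = j ∧ x ℓ = true).card + (univ.filter fun ℓ => h ℓ = j).card := by
  rw [blockVertices, card_image_of_injective _ huv, card_disjSum]

theorem image_sumElim_subset {V₁ : Finset V} (huV₁ : ∀ ℓ, u ℓ ∈ V₁) (hvV₁ : ∀ ℓ, v ℓ ∈ V₁) :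
    univ.image (Sum.elim u v) ⊆ V₁ := by
  intro w hw
  obtain ⟨ℓ | ℓ, -, rfl⟩ := mem_image.mp hw
  exacts [huV₁ ℓ, hvV₁ ℓ]

theorem notMem_image_sumElim {a : V} (ha : ∀ ℓ, a ≠ u ℓ ∧ a ≠ v ℓ) :
    a ∉ univ.image (Sum.elim u v) := by
  simpa [eq_comm (b := a), forall_and] using ha

theorem vertexDisjoint_keptEdges (huv : Function.Injective (Sum.elim u v)) :
    VertexDisjoint (keptEdges u v x) := by
  simp only [VertexDisjoint, keptEdges, mem_image]
  rintro _ ⟨ℓ, -, rfl⟩ _ ⟨ℓ', -, rfl⟩ hne w hw hw'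
  have hℓ : ℓ ≠ ℓ' := by rintro rfl; exact hne rfl
  rcases Sym2.mem_iff.mp hw with rfl | rfl <;> rcases Sym2.mem_iff.mp hw' with h' | h'
  exacts [hℓ (Sum.inl_injective (huv h')), Sum.inl_ne_inr (huv h'),
    Sum.inr_ne_inl (huv h'), hℓ (Sum.inr_injective (huv h'))]

theorem card_keptEdges (huv : Function.Injective (Sum.elim u v)) :
    (keptEdges u v x).card = (univ.filter fun ℓ => x ℓ = true).card := by
  refine card_image_of_injective _ fun a b hab => ?_
  rcases Sym2.eq_iff.mp hab with ⟨h', -⟩ | ⟨h', -⟩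
  exacts [Sum.inl_injective (huv h'), absurd (huv (a₁ := .inl a) (a₂ := .inr b) h') Sum.inl_ne_inr]

theorem not_isDiag_of_mem_keptEdges_union_cliqueEdges [Fintype V]
    (huv : Function.Injective (Sum.elim u v)) {e : Sym2 V}
    (he : e ∈ keptEdges u v x ∪ cliqueEdges v h) : ¬ e.IsDiag := by
  rcases mem_union.mp he with he | he
  · obtain ⟨ℓ, -, rfl⟩ := mem_image.mp he
    exact fun heq => Sum.inl_ne_inr (huv (a₁ := .inl ℓ) (a₂ := .inr ℓ) heq)
  · obtain ⟨ℓ, ℓ', hne, -, rfl⟩ := (mem_filter.mp he).2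
    exact fun heq => hne (Sum.inr_injective (huv (a₁ := .inr ℓ) (a₂ := .inr ℓ') heq))

theorem exists_subset_blockVertices_of_mem [Fintype V] {e : Sym2 V}
    (he : e ∈ keptEdges u v x ∪ cliqueEdges v h) :
    ∃ j, ∀ w ∈ e, w ∈ blockVertices u v x h j := by
  have hv : ∀ ℓ, v ℓ ∈ blockVertices u v x h (h ℓ) := fun ℓ =>
    mem_image_of_mem (Sum.elim u v) (inr_mem_disjSum.mpr (by simp))
  rcases mem_union.mp he with he | he
  · obtain ⟨ℓ, hxℓ, rfl⟩ := mem_image.mp he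
    have hu : u ℓ ∈ blockVertices u v x h (h ℓ) :=
      mem_image_of_mem (Sum.elim u v) (inl_mem_disjSum.mpr (by simpa using hxℓ))
    exact ⟨h ℓ, fun w hw => by rcases Sym2.mem_iff.mp hw with rfl | rfl; exacts [hu, hv ℓ]⟩
  · obtain ⟨ℓ, ℓ', -, hh, rfl⟩ := (mem_filter.mp he).2
    exact ⟨h ℓ, fun w hw => by rcases Sym2.mem_iff.mp hw with rfl | rfl; exacts [hv ℓ, hh ▸ hv ℓ']⟩

theorem four_mul_card_add_le_of_odd [Fintype V] (huv : Function.Injective (Sum.elim u v))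
    (hr : r = q * p) (hpeven : Even p) (hfib : ∀ j, (univ.filter fun ℓ => h ℓ = j).card = p)
    (hx : (univ.filter fun ℓ => x ℓ = true).card * 2 = r)
    (hodd : ∀ j, (univ.filter fun ℓ => h ℓ = j ∧ x ℓ = true).card % 2 = 1)
    {N : Finset (Sym2 V)} (hN : VertexDisjoint N) (hNsub : N ⊆ keptEdges u v x ∪ cliqueEdges v h) :
    4 * N.card + 2 * q ≤ 3 * r := by
  set t := fun j => (univ.filter fun ℓ => h ℓ = j ∧ x ℓ = true).card
  set Nj := fun j => N.filter fun e => ∀ w ∈ e, w ∈ blockVertices u v x h j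
  have hcover : N ⊆ univ.biUnion Nj := fun e he => by
    obtain ⟨j, hj⟩ := exists_subset_blockVertices_of_mem (hNsub he)
    exact mem_biUnion.mpr ⟨j, mem_univ _, mem_filter.mpr ⟨he, hj⟩⟩
  -- `blockVertices j` has the odd size `t j + p`, so a matching inside it misses a vertex.
  have hblock : ∀ j, 2 * (Nj j).card + 1 ≤ t j + p := by
    intro j
    simp only [Nj, t]
    have hle := (hN.subset (filter_subset _ _)).two_mul_card_le (W := blockVertices u v x h j)
      fun e he => ⟨not_isDiag_of_mem_keptEdges_union_cliqueEdges huv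
        (hNsub (filter_subset _ _ he)), (mem_filter.mp he).2⟩
    rw [card_blockVertices huv, hfib] at hle
    have := hodd j
    obtain ⟨k, hk⟩ := hpeven
    omega
  have hsum_t : ∑ j, t j = (univ.filter fun ℓ => x ℓ = true).card := by
    rw [card_eq_sum_card_fiberwise (f := h) (t := univ) (by simp)]
    simp only [t, filter_filter, and_comm]
  have hfibers : 2 * N.card + q ≤ (univ.filter fun ℓ => x ℓ = true).card + r :=
    calc 2 * N.card + q ≤ ∑ j, (2 * (Nj j).card + 1) := by
          rw [sum_add_distrib, ← mul_sum, sum_const, card_univ, Fintype.card_fin, smul_eq_mul,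
            mul_one]
          gcongr
          exact (card_le_card hcover).trans card_biUnion_le
      _ ≤ ∑ j, (t j + p) := sum_le_sum fun j _ => hblock j
      _ = (univ.filter fun ℓ => x ℓ = true).card + r := by
          rw [sum_add_distrib, hsum_t, sum_const, card_univ, Fintype.card_fin, smul_eq_mul]
          omega
  omega

theorem exists_vertexDisjoint_subset_cliqueEdges [Fintype V] (hv : Function.Injective v)
    (S : Finset (Fin r)) (hS : ∀ j, Even (S.filter (h · = j)).card) :
    ∃ Cp ⊆ cliqueEdges v h, VertexDisjoint Cp ∧ (∀ e ∈ Cp, ∀ w ∈ e, ∃ ℓ ∈ S, w = v ℓ) ∧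
      2 * Cp.card = S.card := by
  obtain ⟨Q, hQ, hQS, hQcard⟩ := exists_vertexDisjoint_pairing h S hS
  refine ⟨Q.image (Sym2.map v), fun e he => ?_, hQ.image_map hv, fun e he w hw => ?_, ?_⟩
  · obtain ⟨d, hd, rfl⟩ := mem_image.mp he
    obtain ⟨a, b, hab, -, -, hh, rfl⟩ := hQS d hd
    exact mem_filter.mpr ⟨mem_univ _, a, b, hab, hh, rfl⟩
  · obtain ⟨d, hd, rfl⟩ := mem_image.mp he
    obtain ⟨a, b, -, ha, hb, -, rfl⟩ := hQS d hd
    rcases Sym2.mem_iff.mp hw with rfl | rfl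
    exacts [⟨a, ha, rfl⟩, ⟨b, hb, rfl⟩]
  · rwa [card_image_of_injective _ (Sym2.map.injective hv)]

theorem exists_vertexDisjoint_subset_four_mul_card_eq_of_even [Fintype V]
    (huv : Function.Injective (Sum.elim u v)) (hpeven : Even p)
    (hfib : ∀ j, (univ.filter fun ℓ => h ℓ = j).card = p)
    (hx : (univ.filter fun ℓ => x ℓ = true).card * 2 = r)
    (heven : ∀ j, (univ.filter fun ℓ => h ℓ = j ∧ x ℓ = true).card % 2 = 0) :
    ∃ N ⊆ keptEdges u v x ∪ cliqueEdges v h, VertexDisjoint N ∧ 4 * N.card = 3 * r := by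
  have hv : Function.Injective v := huv.comp Sum.inr_injective
  set F := univ.filter fun ℓ => x ℓ = false
  have hFeven : ∀ j, Even (F.filter (h · = j)).card := by
    intro j
    have hsplit : (F.filter (h · = j)).card + (univ.filter fun ℓ => h ℓ = j ∧ x ℓ = true).card
        = p := by
      rw [← hfib j, ← card_filter_add_card_filter_not (s := univ.filter fun ℓ => h ℓ = j)
        fun ℓ => x ℓ = false]
      simp [F, filter_filter, and_comm]
    have := heven j
    obtain ⟨k, hk⟩ := hpeven
    exact Nat.even_iff.mpr (by omega)
  obtain ⟨Cp, hCp, hCpdisj, hCpF, hCpcard⟩ := exists_vertexDisjoint_subset_cliqueEdges hv F hFeven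
  set X : Set V := {w | ∃ ℓ, x ℓ = true ∧ (w = u ℓ ∨ w = v ℓ)}
  have hkeptX : ∀ e ∈ keptEdges u v x, ∀ w ∈ e, w ∈ X := by
    simp only [keptEdges, mem_image, mem_filter, mem_univ, true_and]
    rintro _ ⟨ℓ, hxℓ, rfl⟩ w hw
    exact ⟨ℓ, hxℓ, Sym2.mem_iff.mp hw⟩
  have hCpX : ∀ e ∈ Cp, ∀ w ∈ e, w ∉ X := by
    rintro e he w hw ⟨ℓ, hxℓ, hwℓ⟩
    obtain ⟨a, ha, rfl⟩ := hCpF e he w hw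
    rcases hwℓ with h' | h'
    · exact Sum.inr_ne_inl (huv h')
    · rw [← hv h', (mem_filter.mp ha).2] at hxℓ
      exact Bool.false_ne_true hxℓ
  refine ⟨keptEdges u v x ∪ Cp, union_subset_union subset_rfl hCp,
    (vertexDisjoint_keptEdges huv).union hCpdisj X hkeptX hCpX, ?_⟩
  have hTF : (univ.filter fun ℓ => x ℓ = true).card + F.card = r := by
    simpa [F] using card_filter_add_card_filter_not (s := univ) fun ℓ => x ℓ = true
  rw [card_union_of_disjoint (disjoint_of_forall_mem_of_forall_notMem X hkeptX hCpX),
    card_keptEdges huv]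
  omega

end InnerEdges

theorem sub_div_lt_one_sub_mul {N r p ε : ℝ} (hp : 0 < p) (hN : 0 < N) (hε : 0 < ε)
    (hpr : p ≤ r / N / (2 * ε)) :
    N - 2 * r + 3 * r / 4 - r / (2 * p) < (1 - ε) * (N - 2 * r + 3 * r / 4) := by
  rw [div_div, le_div_iff₀ (by positivity)] at hpr
  have hr : 0 < r := by nlinarith [mul_pos hp (mul_pos hN hε)]
  have hεN : ε * N ≤ r / (2 * p) := by
    rw [le_div_iff₀ (by positivity)]
    nlinarith
  nlinarith [mul_pos hε hr]

section Construction

variable {V : Type*} [Fintype V] [DecidableEq V] {r q p t : ℕ} {jstar : Fin t} {V₁ : Finset V}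
  {u v : Fin r → V} {x : Fin r → Bool} {h : Fin r → Fin q} {Msub : Fin t → Finset (Sym2 V)}
  {P C : Finset (Sym2 V)} {G : SimpleGraph V}

theorem keptEdges_union_cliqueEdges_subset_edgeSet (hMstar : Msub jstar = keptEdges u v x)
    (hC : C = cliqueEdges v h) (hG : G.edgeSet = ↑((univ.biUnion Msub) ∪ P ∪ C)) :
    ↑(keptEdges u v x ∪ cliqueEdges v h) ⊆ G.edgeSet := by
  rw [hG, ← hMstar, ← hC]
  exact coe_subset.mpr (union_subset_union
    ((subset_biUnion_of_mem Msub (mem_univ jstar)).trans subset_union_left) subset_rfl)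

theorem exists_mem_sdiff_or_mem_keptEdges_union_cliqueEdges (hMstar : Msub jstar = keptEdges u v x)
    (hMsub : ∀ j, j ≠ jstar → ∀ e ∈ Msub j, (∀ w : V, w ∈ e → w ∈ V₁) ∧
      ¬ (∀ w : V, w ∈ e → ∃ ℓ, w = u ℓ ∨ w = v ℓ))
    (hPend : ∀ e ∈ P, ∃ a b : V, e = s(a, b) ∧ a ∈ V₁ ∧ (∀ ℓ, a ≠ u ℓ ∧ a ≠ v ℓ) ∧ b ∉ V₁)
    (hC : C = cliqueEdges v h) (hG : G.edgeSet = ↑((univ.biUnion Msub) ∪ P ∪ C)) {e : Sym2 V}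
    (he : e ∈ G.edgeSet) :
    (∃ w ∈ e, w ∈ V₁ \ univ.image (Sum.elim u v)) ∨ e ∈ keptEdges u v x ∪ cliqueEdges v h := by
  have houter : ∀ w ∈ V₁, (∀ ℓ, w ≠ u ℓ ∧ w ≠ v ℓ) → w ∈ V₁ \ univ.image (Sum.elim u v) :=
    fun w hw hne => mem_sdiff.mpr ⟨hw, notMem_image_sumElim hne⟩
  rw [hG, coe_union, coe_union] at he
  rcases he with (he | he) | he
  · obtain ⟨j, -, hj⟩ := mem_biUnion.mp he
    by_cases hjs : j = jstar
    · rw [hjs, hMstar] at hj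
      exact Or.inr (mem_union_left _ hj)
    · obtain ⟨hV₁, hnot⟩ := hMsub j hjs e hj
      push Not at hnot
      obtain ⟨w, hw, hne⟩ := hnot
      exact Or.inl ⟨w, hw, houter w (hV₁ w hw) hne⟩
  · obtain ⟨a, b, rfl, ha, hne, -⟩ := hPend e he
    exact Or.inl ⟨a, Sym2.mem_mk_left a b, houter a ha hne⟩
  · rw [mem_coe, hC] at he
    exact Or.inr (mem_union_right _ he)

theorem four_mul_matchNum_add_le_of_odd (huv : Function.Injective (Sum.elim u v))
    (huV₁ : ∀ ℓ, u ℓ ∈ V₁) (hvV₁ : ∀ ℓ, v ℓ ∈ V₁) (hr : r = q * p) (hpeven : Even p)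
    (hfib : ∀ j, (univ.filter fun ℓ => h ℓ = j).card = p)
    (hx : (univ.filter fun ℓ => x ℓ = true).card * 2 = r)
    (hodd : ∀ j, (univ.filter fun ℓ => h ℓ = j ∧ x ℓ = true).card % 2 = 1)
    (hedge : ∀ e ∈ G.edgeSet,
      (∃ w ∈ e, w ∈ V₁ \ univ.image (Sum.elim u v)) ∨ e ∈ keptEdges u v x ∪ cliqueEdges v h) :
    4 * matchNum G + 2 * q ≤ 4 * (V₁.card - 2 * r) + 3 * r := by
  obtain ⟨M, hM, hMcard⟩ := exists_isMatchingIn_card_eq_matchNum G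
  set O := V₁ \ univ.image (Sum.elim u v)
  have hO : O.card = V₁.card - 2 * r := by
    rw [card_sdiff_of_subset (image_sumElim_subset huV₁ hvV₁), card_image_of_injective _ huv]
    simp [two_mul]
  set Mout := M.filter fun e => ∃ w ∈ e, w ∈ O
  set Min := M.filter (· ∈ keptEdges u v x ∪ cliqueEdges v h)
  have hcover : M ⊆ Mout ∪ Min := fun e he => by
    rcases hedge e (hM.1 e he) with h' | h'
    · exact mem_union_left _ (mem_filter.mpr ⟨he, h'⟩)
    · exact mem_union_right _ (mem_filter.mpr ⟨he, h'⟩)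
  have hout : Mout.card ≤ O.card :=
    (hM.vertexDisjoint.subset (filter_subset _ _)).card_le_of_forall_exists_mem
      fun e he => (mem_filter.mp he).2
  have hin : 4 * Min.card + 2 * q ≤ 3 * r :=
    four_mul_card_add_le_of_odd huv hr hpeven hfib hx hodd
      (hM.vertexDisjoint.subset (filter_subset _ _)) fun e he => (mem_filter.mp he).2
  have := (card_le_card hcover).trans (card_union_le _ _)
  omega

theorem le_four_mul_matchNum_of_even (huv : Function.Injective (Sum.elim u v))
    (huV₁ : ∀ ℓ, u ℓ ∈ V₁) (hvV₁ : ∀ ℓ, v ℓ ∈ V₁) (hpeven : Even p)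
    (hfib : ∀ j, (univ.filter fun ℓ => h ℓ = j).card = p)
    (hx : (univ.filter fun ℓ => x ℓ = true).card * 2 = r)
    (heven : ∀ j, (univ.filter fun ℓ => h ℓ = j ∧ x ℓ = true).card % 2 = 0)
    (hMstar : Msub jstar = keptEdges u v x) (hPmatch : VertexDisjoint P)
    (hPend : ∀ e ∈ P, ∃ a b : V, e = s(a, b) ∧ a ∈ V₁ ∧ (∀ ℓ, a ≠ u ℓ ∧ a ≠ v ℓ) ∧ b ∉ V₁)
    (hPcover : ∀ b : V, b ∉ V₁ → ∃ e ∈ P, b ∈ e) (hC : C = cliqueEdges v h)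
    (hG : G.edgeSet = ↑((univ.biUnion Msub) ∪ P ∪ C)) :
    4 * (Fintype.card V - V₁.card) + 3 * r ≤ 4 * matchNum G := by
  obtain ⟨N, hNsub, hN, hNcard⟩ :=
    exists_vertexDisjoint_subset_four_mul_card_eq_of_even huv hpeven hfib hx heven
  set X : Set V := ↑(univ.image (Sum.elim u v))
  have hNX : ∀ e ∈ N, ∀ w ∈ e, w ∈ X := fun e he w hw => by
    obtain ⟨j, hj⟩ := exists_subset_blockVertices_of_mem (hNsub he)
    exact image_subset_image (subset_univ _) (hj w hw)
  have hPX : ∀ e ∈ P, ∀ w ∈ e, w ∉ X := by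
    intro e he w hw
    obtain ⟨a, b, rfl, -, ha, hb⟩ := hPend e he
    rcases Sym2.mem_iff.mp hw with rfl | rfl
    · exact notMem_image_sumElim ha
    · exact fun hbX => hb (image_sumElim_subset huV₁ hvV₁ hbX)
  have hPcard : V₁ᶜ.card ≤ P.card := by
    refine card_le_card_of_forall_subsingleton (fun w e => w ∈ e)
      (fun w hw => hPcover w (mem_compl.mp hw)) fun e he => ?_
    obtain ⟨a, b, rfl, ha, -, -⟩ := hPend e he
    rintro w ⟨hw, hwe⟩ w' ⟨hw', hwe'⟩
    rw [mem_compl] at hw hw'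
    rcases Sym2.mem_iff.mp hwe with rfl | rfl <;> rcases Sym2.mem_iff.mp hwe' with rfl | rfl
    all_goals first | rfl | contradiction
  have hmatch : IsMatchingIn G (N ∪ P) := by
    refine ⟨fun e he => ?_, hN.union hPmatch X hNX hPX⟩
    rcases mem_union.mp he with he | he
    · exact keptEdges_union_cliqueEdges_subset_edgeSet hMstar hC hG (hNsub he)
    · rw [hG]
      exact mem_union_left _ (mem_union_right _ he)
  have hcard := hmatch.card_le_matchNum
  rw [card_union_of_disjoint (disjoint_of_forall_mem_of_forall_notMem X hNX hPX)] at hcard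
  rw [card_compl] at hPcard
  omega

end Construction

theorem stmt10_general {V : Type*} [Fintype V] [DecidableEq V]
    (N₁ r q p t : ℕ) (jstar : Fin t) (hpeven : Even p) (hppos : 0 < p)
    (hr : r = q * p) (h2r : 2 * r ≤ N₁)
    (hcardV : Fintype.card V = N₁ + (N₁ - 2 * r))
    (V₁ : Finset V) (hV₁ : V₁.card = N₁)
    (u v : Fin r → V)
    (huv : Function.Injective (fun z : Fin r ⊕ Fin r => Sum.elim u v z))
    (huV₁ : ∀ ℓ, u ℓ ∈ V₁) (hvV₁ : ∀ ℓ, v ℓ ∈ V₁)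
    (x : Fin r → Bool) (hx : (Finset.univ.filter (fun ℓ => x ℓ = true)).card * 2 = r)
    (h : Fin r → Fin q)
    (hfib : ∀ j : Fin q, (Finset.univ.filter (fun ℓ => h ℓ = j)).card = p)
    (Msub : Fin t → Finset (Sym2 V))
    (hMstar : Msub jstar
      = (Finset.univ.filter (fun ℓ => x ℓ = true)).image (fun ℓ => s(u ℓ, v ℓ)))
    (hMsub : ∀ j, j ≠ jstar →
      ((∀ e ∈ Msub j, ∀ f ∈ Msub j, e ≠ f → ∀ w : V, w ∈ e → w ∉ f) ∧
        ∀ e ∈ Msub j, (∀ w : V, w ∈ e → w ∈ V₁) ∧ ¬ e.IsDiag ∧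
          ¬ (∀ w : V, w ∈ e → ∃ ℓ, w = u ℓ ∨ w = v ℓ)))
    (P : Finset (Sym2 V))
    (hPmatch : ∀ e ∈ P, ∀ f ∈ P, e ≠ f → ∀ w : V, w ∈ e → w ∉ f)
    (hPend : ∀ e ∈ P, ∃ a b : V, e = s(a, b) ∧ a ∈ V₁ ∧
      (∀ ℓ, a ≠ u ℓ ∧ a ≠ v ℓ) ∧ b ∉ V₁)
    (hPcoverR : ∀ b : V, b ∉ V₁ → ∃ e ∈ P, b ∈ e)
    (C : Finset (Sym2 V))
    (hC : C = Finset.univ.filter (fun e : Sym2 V =>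
      ∃ ℓ ℓ', ℓ ≠ ℓ' ∧ h ℓ = h ℓ' ∧ e = s(v ℓ, v ℓ')))
    (G : SimpleGraph V)
    (hG : G.edgeSet = ↑((Finset.univ.biUnion Msub) ∪ P ∪ C)) :
    ((∀ j : Fin q, (Finset.univ.filter (fun ℓ => h ℓ = j ∧ x ℓ = true)).card % 2 = 0) →
        4 * (N₁ - 2 * r) + 3 * r ≤ 4 * matchNum G) ∧
    ((∀ j : Fin q, (Finset.univ.filter (fun ℓ => h ℓ = j ∧ x ℓ = true)).card % 2 = 1) →
        4 * p * matchNum G ≤ 4 * p * (N₁ - 2 * r) + 3 * p * r - 2 * r) ∧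
    (∀ ε : ℝ, 0 < ε → ε < 1 → 0 < N₁ →
      (p : ℝ) ≤ ((r : ℝ) / N₁) / (2 * ε) →
      (1 - ε) * (((N₁ - 2 * r : ℕ) : ℝ) + 3 * r / 4)
        > ((N₁ - 2 * r : ℕ) : ℝ) + 3 * r / 4 - r / (2 * p)) := by
  refine ⟨fun heven => ?_, fun hodd => ?_, fun ε hε _ hN₁ hpr => ?_⟩
  · have hyes := le_four_mul_matchNum_of_even huv huV₁ hvV₁ hpeven hfib hx heven hMstar hPmatch
      hPend hPcoverR hC hG
    rwa [hcardV, hV₁, Nat.add_sub_cancel_left] at hyes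
  · have hedge := fun e (he : e ∈ G.edgeSet) =>
      exists_mem_sdiff_or_mem_keptEdges_union_cliqueEdges hMstar
        (fun j hj f hf => ⟨((hMsub j hj).2 f hf).1, ((hMsub j hj).2 f hf).2.2⟩) hPend hC hG he
    have hno := four_mul_matchNum_add_le_of_odd huv huV₁ hvV₁ hr hpeven hfib hx hodd hedge
    rw [hV₁] at hno
    refine Nat.le_sub_of_add_le ?_
    calc 4 * p * matchNum G + 2 * r = p * (4 * matchNum G + 2 * q) := by rw [hr]; ring
      _ ≤ p * (4 * (N₁ - 2 * r) + 3 * r) := Nat.mul_le_mul_left p hno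
      _ = 4 * p * (N₁ - 2 * r) + 3 * p * r := by ring
  · have hgap := sub_div_lt_one_sub_mul (N := N₁) (r := r) (by exact_mod_cast hppos)
      (by exact_mod_cast hN₁) hε hpr
    rw [Nat.cast_sub h2r]
    push_cast
    linarith

/-- Claim 6.4: `G` is built on `|V₁| + (|V₁| - 2r)` vertices from: sub-matchings of
the `t` induced matchings of an RS graph on `V₁` (with `M_{j*}` given by the edges
`s(u ℓ, v ℓ)` restricted to the vector `x` of Hamming weight `r/2`, and the other
sub-matchings avoiding `V(M_{j*})` entirely), a perfect matching `P` between
`V₁ \ V(M_{j*})` and `V \ V₁`, and the `p`-clique family `C` of a perfect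
`p`-hypermatching `h` on `[r]` (fibers of size `p`, `p` even, `r = q·p`) placed on
`R(M_{j*}) = {v ℓ}`. Then in the Yes case of BHH⁰ (all fiber parities of `x` are 0),
`opt(G) ≥ (|V₁| - 2r) + 3r/4`; in the No case (all parities 1),
`opt(G) ≤ (|V₁| - 2r) + 3r/4 - r/(2p)` (both stated multiplied out); and for
`p ≤ (r/|V₁|)/(2ε)` one has `(1-ε)·opt_Yes > opt_No`. -/
theorem stmt10 {V : Type*} [Fintype V] [DecidableEq V]
    (N₁ r q p t : ℕ) (jstar : Fin t) (hpeven : Even p) (hppos : 0 < p)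
    (hr : r = q * p) (h2r : 2 * r ≤ N₁)
    (hcardV : Fintype.card V = N₁ + (N₁ - 2 * r))
    (V₁ : Finset V) (hV₁ : V₁.card = N₁)
    (u v : Fin r → V)
    (huv : Function.Injective (fun z : Fin r ⊕ Fin r => Sum.elim u v z))
    (huV₁ : ∀ ℓ, u ℓ ∈ V₁) (hvV₁ : ∀ ℓ, v ℓ ∈ V₁)
    (x : Fin r → Bool) (hx : (Finset.univ.filter (fun ℓ => x ℓ = true)).card * 2 = r)
    (h : Fin r → Fin q)
    (hfib : ∀ j : Fin q, (Finset.univ.filter (fun ℓ => h ℓ = j)).card = p)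
    (Msub : Fin t → Finset (Sym2 V))
    (hMstar : Msub jstar
      = (Finset.univ.filter (fun ℓ => x ℓ = true)).image (fun ℓ => s(u ℓ, v ℓ)))
    (hMsub : ∀ j, j ≠ jstar →
      ((∀ e ∈ Msub j, ∀ f ∈ Msub j, e ≠ f → ∀ w : V, w ∈ e → w ∉ f) ∧
        ∀ e ∈ Msub j, (∀ w : V, w ∈ e → w ∈ V₁) ∧ ¬ e.IsDiag ∧
          ¬ (∀ w : V, w ∈ e → ∃ ℓ, w = u ℓ ∨ w = v ℓ)))
    (P : Finset (Sym2 V))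
    (hPmatch : ∀ e ∈ P, ∀ f ∈ P, e ≠ f → ∀ w : V, w ∈ e → w ∉ f)
    (hPend : ∀ e ∈ P, ∃ a b : V, e = s(a, b) ∧ a ∈ V₁ ∧
      (∀ ℓ, a ≠ u ℓ ∧ a ≠ v ℓ) ∧ b ∉ V₁)
    (hPcoverL : ∀ a ∈ V₁, (∀ ℓ, a ≠ u ℓ ∧ a ≠ v ℓ) → ∃ e ∈ P, a ∈ e)
    (hPcoverR : ∀ b : V, b ∉ V₁ → ∃ e ∈ P, b ∈ e)
    (C : Finset (Sym2 V))
    (hC : C = Finset.univ.filter (fun e : Sym2 V =>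
      ∃ ℓ ℓ', ℓ ≠ ℓ' ∧ h ℓ = h ℓ' ∧ e = s(v ℓ, v ℓ')))
    (G : SimpleGraph V)
    (hG : G.edgeSet = ↑((Finset.univ.biUnion Msub) ∪ P ∪ C)) :
    ((∀ j : Fin q, (Finset.univ.filter (fun ℓ => h ℓ = j ∧ x ℓ = true)).card % 2 = 0) →
        4 * (N₁ - 2 * r) + 3 * r ≤ 4 * matchNum G) ∧
    ((∀ j : Fin q, (Finset.univ.filter (fun ℓ => h ℓ = j ∧ x ℓ = true)).card % 2 = 1) →
        4 * p * matchNum G ≤ 4 * p * (N₁ - 2 * r) + 3 * p * r - 2 * r) ∧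
    (∀ ε : ℝ, 0 < ε → ε < 1 → 0 < N₁ →
      (p : ℝ) ≤ ((r : ℝ) / N₁) / (2 * ε) →
      (1 - ε) * (((N₁ - 2 * r : ℕ) : ℝ) + 3 * r / 4)
        > ((N₁ - 2 * r : ℕ) : ℝ) + 3 * r / 4 - r / (2 * p)) :=
  stmt10_general N₁ r q p t jstar hpeven hppos hr h2r hcardV V₁ hV₁ u v huv huV₁ hvV₁ x hx h hfib
    Msub hMstar hMsub P hPmatch hPend hPcoverR C hC G hG
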